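/- arXiv:1307.1885 — 2 statements merged into one kernel-verified Lean document; each statement's English description precedes it below -/
import Mathlib

section
/- The chronological-or-lightlike ordering defined by bouncing signals is correctly characterized: e ≺ e' (there exists an event e'' with a forward light signal from e to e'' and a forward light signal from e'' to e') holds if and only if e'_t - e_t ≥ |spatial(e' - e)|, i.e., if and only if e' is in the causal future of e. -/
/-- Squared Euclidean norm on `F^3`. -/
def nsq {F : Type*} [Field F] [LinearOrder F] [IsStrictOrderedRing F] (v : Fin 3 → F) : F :=
  v 0 ^ 2 + v 1 ^ 2 + v 2 ^ 2

/-- Standard inner product on `F^3`. -/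
def dot3 {F : Type*} [Field F] [LinearOrder F] [IsStrictOrderedRing F] (u v : Fin 3 → F) : F :=
  u 0 * v 0 + u 1 * v 1 + u 2 * v 2

/-- A Euclidean field: an ordered field in which every positive element has a square root. -/
def IsEuclidean (F : Type*) [Field F] [LinearOrder F] [IsStrictOrderedRing F] : Prop :=
  ∀ x : F, 0 < x → ∃ y : F, y ^ 2 = x

/-- A line in `F^4 = F × F^3`. -/
def IsLine {F : Type*} [Field F] [LinearOrder F] [IsStrictOrderedRing F] (L : Set (F × (Fin 3 → F))) : Prop :=
  ∃ p d : F × (Fin 3 → F), d ≠ 0 ∧ L = {x | ∃ s : F, x = p + s • d}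

/-- A particle: a line in `F^4` of slope less than 1 (spatial speed below light speed). -/
def IsParticle {F : Type*} [Field F] [LinearOrder F] [IsStrictOrderedRing F] (L : Set (F × (Fin 3 → F))) : Prop :=
  ∃ p d : F × (Fin 3 → F), d.1 ≠ 0 ∧ nsq d.2 < d.1 ^ 2 ∧
    L = {x | ∃ s : F, x = p + s • d}

/-- Forward light signal from `p` to `q` (degenerate case `p = q` allowed):
the time increases and the spatial distance equals the elapsed time. -/
def Sig {F : Type*} [Field F] [LinearOrder F] [IsStrictOrderedRing F] (p q : F × (Fin 3 → F)) : Prop :=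
  p.1 ≤ q.1 ∧ nsq (q.2 - p.2) = (q.1 - p.1) ^ 2

/-- A vertical line: a line parallel to the time axis. -/
def IsVertical {F : Type*} [Field F] [LinearOrder F] [IsStrictOrderedRing F] (L : Set (F × (Fin 3 → F))) : Prop :=
  ∃ v0 : Fin 3 → F, L = {x | x.2 = v0}

/-- Two subsets of `F^4` are parallel when one is a translate of the other. -/
def LinesParallel {F : Type*} [Field F] [LinearOrder F] [IsStrictOrderedRing F]
    (L L' : Set (F × (Fin 3 → F))) : Prop :=
  ∃ w : F × (Fin 3 → F), L' = (fun x => x + w) '' L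

/-- `e ≺ e'` via a bouncing signal: some event `e''` receives a forward light signal
from `e` and sends one to `e'`. -/
def Chron {F : Type*} [Field F] [LinearOrder F] [IsStrictOrderedRing F] (e e' : F × (Fin 3 → F)) : Prop :=
  ∃ e'' : F × (Fin 3 → F), Sig e e'' ∧ Sig e'' e'

lemma cauchy3 {F : Type*} [Field F] [LinearOrder F] [IsStrictOrderedRing F] (u v : Fin 3 → F) :
    (dot3 u v) ^ 2 ≤ nsq u * nsq v := by
  simp only [dot3, nsq]
  nlinarith [sq_nonneg (u 0 * v 1 - u 1 * v 0), sq_nonneg (u 0 * v 2 - u 2 * v 0),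
    sq_nonneg (u 1 * v 2 - u 2 * v 1)]

lemma nsq_nonneg {F : Type*} [Field F] [LinearOrder F] [IsStrictOrderedRing F] (v : Fin 3 → F) : 0 ≤ nsq v := by
  simp only [nsq]; positivity

set_option maxHeartbeats 1600000 in
/-- `e ≺ e'` iff `e'` is in the causal future of `e`, i.e.
`e'.t - e.t ≥ |spatial (e' - e)|` (expressed with squares, both sides nonnegative). -/
theorem stmt4 {F : Type*} [Field F] [LinearOrder F] [IsStrictOrderedRing F] (hEu : IsEuclidean F)
    (e e' : F × (Fin 3 → F)) :
    Chron e e' ↔ (0 ≤ e'.1 - e.1 ∧ nsq (e'.2 - e.2) ≤ (e'.1 - e.1) ^ 2) := by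
  constructor
  · rintro ⟨m, ⟨h1, h2⟩, ⟨h3, h4⟩⟩
    have ha : 0 ≤ m.1 - e.1 := by linarith
    have hb : 0 ≤ e'.1 - m.1 := by linarith
    refine ⟨by linarith, ?_⟩
    have hsplit : nsq (e'.2 - e.2)
        = nsq (m.2 - e.2) + 2 * dot3 (m.2 - e.2) (e'.2 - m.2) + nsq (e'.2 - m.2) := by
      simp only [nsq, dot3, Pi.sub_apply]; ring
    have hc := cauchy3 (m.2 - e.2) (e'.2 - m.2)
    rw [h2, h4] at hc
    have hAB : dot3 (m.2 - e.2) (e'.2 - m.2) ≤ (m.1 - e.1) * (e'.1 - m.1) := by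
      nlinarith [mul_nonneg ha hb]
    rw [hsplit, h2, h4]; nlinarith
  · rintro ⟨hT, hle⟩
    set T := e'.1 - e.1 with hTdef
    set d := e'.2 - e.2 with hddef
    rcases eq_or_lt_of_le (nsq_nonneg d) with h0 | hpos
    · -- nsq d = 0, bounce sideways
      refine ⟨(e.1 + T / 2, e.2 + (T / 2) • ![1, 0, 0]), ⟨by simp; linarith, ?_⟩,
        ⟨by simp; linarith, ?_⟩⟩
      · simp only [nsq, Pi.sub_apply, Pi.add_apply, Pi.smul_apply, smul_eq_mul]
        norm_num [Matrix.cons_val_two, Matrix.tail_cons, Matrix.head_cons]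
      · have h00 : d 0 ^ 2 + d 1 ^ 2 + d 2 ^ 2 = 0 := by simpa [nsq] using h0.symm
        have e0 : e'.2 0 - e.2 0 = 0 := by
          have : d 0 = 0 := by nlinarith [sq_nonneg (d 0), sq_nonneg (d 1), sq_nonneg (d 2)]
          simpa [hddef] using this
        have e1 : e'.2 1 - e.2 1 = 0 := by
          have : d 1 = 0 := by nlinarith [sq_nonneg (d 0), sq_nonneg (d 1), sq_nonneg (d 2)]
          simpa [hddef] using this
        have e2 : e'.2 2 - e.2 2 = 0 := by
          have : d 2 = 0 := by nlinarith [sq_nonneg (d 0), sq_nonneg (d 1), sq_nonneg (d 2)]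
          simpa [hddef] using this
        simp only [nsq, Pi.sub_apply, Pi.add_apply, Pi.smul_apply, smul_eq_mul]
        norm_num [Matrix.cons_val_two, Matrix.tail_cons, Matrix.head_cons]
        nlinarith [e0, e1, e2]
    · -- nsq d > 0
      obtain ⟨y, hy⟩ := hEu _ hpos
      have hyne : y ≠ 0 := by rintro rfl; simp at hy; exact absurd hy.symm (ne_of_gt hpos)
      set r := |y| with hrdef
      have hr2 : r ^ 2 = nsq d := by rw [hrdef, sq_abs, hy]
      have hrpos : 0 < r := abs_pos.mpr hyne
      have hrne : r ≠ 0 := ne_of_gt hrpos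
      have hrT : r ≤ T := by nlinarith
      set s := (T + r) / 2 with hsdef
      have hs0 : 0 ≤ s := by rw [hsdef]; linarith
      refine ⟨(e.1 + s, e.2 + (s / r) • d), ⟨by simpa using hs0, ?_⟩, ⟨?_, ?_⟩⟩
      · show nsq (e.2 + (s / r) • d - e.2) = (e.1 + s - e.1) ^ 2
        have h1 : e.2 + (s / r) • d - e.2 = (s / r) • d := by abel
        have h2 : nsq ((s / r) • d) = (s / r) ^ 2 * nsq d := by
          simp only [nsq, Pi.smul_apply, smul_eq_mul]; ring
        rw [h1, h2, ← hr2, add_sub_cancel_left]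
        field_simp
      · show e.1 + s ≤ e'.1
        have : s ≤ T := by rw [hsdef]; linarith
        linarith
      · show nsq (e'.2 - (e.2 + (s / r) • d)) = (e'.1 - (e.1 + s)) ^ 2
        have h1 : e'.2 - (e.2 + (s / r) • d) = (1 - s / r) • d := by
          funext i
          simp only [Pi.sub_apply, Pi.add_apply, Pi.smul_apply, smul_eq_mul, hddef]
          ring
        have h2 : nsq ((1 - s / r) • d) = (1 - s / r) ^ 2 * nsq d := by
          simp only [nsq, Pi.smul_apply, smul_eq_mul]; ring
        have h3 : e'.1 - (e.1 + s) = T - s := by rw [hTdef]; ring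
        rw [h1, h2, ← hr2, h3]
        have h4 : (1 - s / r) ^ 2 * r ^ 2 = (r - s) ^ 2 := by
          field_simp
        rw [h4, hsdef]; ring
end

section
/- In F^4, if e1, e2, e3, e4 lie on the time axis and there exist a vertical line a' and events f, f' on a' with forward light signals from e1 to f, f to e3, e2 to f', and f' to e4, then the time elapsed between e1 and e2 equals that between e3 and e4: (e2)_t - (e1)_t = (e4)_t - (e3)_t. -/
/-! Along a forward light signal the elapsed time is the nonnegative square root of the squared
spatial distance covered, so it depends only on that distance. All four signals cover the distance
between the time axis and the vertical line, so they take a common time `τ`; hence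
`t3 = t1 + 2τ` and `t4 = t2 + 2τ`. -/

section

variable {F : Type*} [Field F] [LinearOrder F] [IsStrictOrderedRing F]

theorem nsq_sub_comm (u v : Fin 3 → F) : nsq (u - v) = nsq (v - u) := by
  simp only [nsq, Pi.sub_apply]
  ring

theorem Sig.time_sub_eq_of_nsq_eq {p q p' q' : F × (Fin 3 → F)} (h : Sig p q) (h' : Sig p' q')
    (hd : nsq (q.2 - p.2) = nsq (q'.2 - p'.2)) : q.1 - p.1 = q'.1 - p'.1 :=
  (sq_eq_sq₀ (sub_nonneg.mpr h.1) (sub_nonneg.mpr h'.1)).mp (h.2 ▸ h'.2 ▸ hd)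

end

theorem stmt6_general {F : Type*} [Field F] [LinearOrder F] [IsStrictOrderedRing F]
    (t1 t2 t3 t4 : F) (L : Set (F × (Fin 3 → F))) (hL : IsVertical L)
    (f f' : F × (Fin 3 → F)) (hf : f ∈ L) (hf' : f' ∈ L)
    (h1 : Sig ((t1, 0) : F × (Fin 3 → F)) f)
    (h2 : Sig f ((t3, 0) : F × (Fin 3 → F)))
    (h3 : Sig ((t2, 0) : F × (Fin 3 → F)) f')
    (h4 : Sig f' ((t4, 0) : F × (Fin 3 → F))) :
    t2 - t1 = t4 - t3 := by
  obtain ⟨v, rfl⟩ := hL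
  have hff' : f.2 = f'.2 := hf.trans hf'.symm
  have out_back : f.1 - t1 = t3 - f.1 := h1.time_sub_eq_of_nsq_eq h2 (nsq_sub_comm _ _)
  have out_back' : f'.1 - t2 = t4 - f'.1 := h3.time_sub_eq_of_nsq_eq h4 (nsq_sub_comm _ _)
  have out_out' : f.1 - t1 = f'.1 - t2 := h1.time_sub_eq_of_nsq_eq h3 (by simp only [hff'])
  linarith

/-- if `e1,…,e4` lie on the time axis and a vertical reflector `a'`
carries events `f, f'` with forward light signals `e1 → f → e3` and `e2 → f' → e4`,
then the elapsed times agree: `t2 - t1 = t4 - t3`. -/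
theorem stmt6 {F : Type*} [Field F] [LinearOrder F] [IsStrictOrderedRing F] (hEu : IsEuclidean F)
    (t1 t2 t3 t4 : F) (L : Set (F × (Fin 3 → F))) (hL : IsVertical L)
    (f f' : F × (Fin 3 → F)) (hf : f ∈ L) (hf' : f' ∈ L)
    (h1 : Sig ((t1, 0) : F × (Fin 3 → F)) f)
    (h2 : Sig f ((t3, 0) : F × (Fin 3 → F)))
    (h3 : Sig ((t2, 0) : F × (Fin 3 → F)) f')
    (h4 : Sig f' ((t4, 0) : F × (Fin 3 → F))) :
    t2 - t1 = t4 - t3 :=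
  stmt6_general t1 t2 t3 t4 L hL f f' hf hf' h1 h2 h3 h4
end
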